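/- Let f be a non-zero vector of a metric vector space (V,Q) such that f ∈ V^⊥ and Q(f) = 0. Then ΔO(V,Q,f) = Δ(V,f) and ΔO'(V,Q,f) = {δ_{a*,f} : a* ∈ (V^⊥)°}, where (V^⊥)° := {a* ∈ V* : ⟨a*,x⟩ = 0 for all x ∈ V^⊥} is the annihilator of the radical. -/

import Mathlib

/-! Setting: a field `F`, a finite-dimensional `F`-vector space `V`, a quadratic form
`Q : V → F` with polar form `B = QuadraticMap.polar Q` (the bilinear map `Q.polarBilin`),
induced map `D = Q.polarBilin : V →ₗ[F] Module.Dual F V`, and radical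
`V^⊥ = LinearMap.ker Q.polarBilin`. -/

variable {F V : Type*} [Field F] [AddCommGroup V] [Module F V] [FiniteDimensional F V]

/-- The map `δ_{c*,f} : x ↦ x + ⟨c*,x⟩ • f`. -/
def deltaMap (c : Module.Dual F V) (f : V) : V →ₗ[F] V :=
  LinearMap.id + c.smulRight f

/-- The orthogonal group `O(V,Q)`, as a set of linear endomorphisms. -/
def orthSet (Q : QuadraticForm F V) : Set (V →ₗ[F] V) :=
  {φ | Function.Bijective φ ∧ ∀ x, Q (φ x) = Q x}

/-- The weak orthogonal group `O'(V,Q)`: isometries fixing the radical elementwise. -/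
def wOrthSet (Q : QuadraticForm F V) : Set (V →ₗ[F] V) :=
  {φ | Function.Bijective φ ∧ (∀ x, Q (φ x) = Q x) ∧
    ∀ x ∈ LinearMap.ker Q.polarBilin, φ x = x}

/-- The group `Δ(V,f) = {δ_{a*,f} : a* ∈ V*, ⟨a*,f⟩ ≠ -1}`. -/
def deltaSet (f : V) : Set (V →ₗ[F] V) :=
  {φ | ∃ a : Module.Dual F V, a f ≠ -1 ∧ φ = deltaMap a f}

/-- The `Q`-reflection `ξ_r : x ↦ x - Q(r)⁻¹ • B(r,x) • r` in the direction of `r`. -/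
noncomputable def xiMap (Q : QuadraticForm F V) (r : V) : V →ₗ[F] V :=
  LinearMap.id - (Q r)⁻¹ • (Q.polarBilin r).smulRight r

/-! Because `f` is radical and `Q f = 0`, `Q (x + t • f) = Q x + t • B(x, f) + t² • Q f = Q x`,
so every invertible `δ_{a,f}` is an isometry. Since `f ≠ 0`, `δ_{a,f}` fixes `x` exactly when
`⟨a, x⟩ = 0`, so it fixes the radical pointwise exactly when `a` annihilates it. -/

theorem QuadraticMap.map_add_smul_of_mem_ker_polarBilin {R M : Type*} [CommRing R]
    [AddCommGroup M] [Module R M] {Q : QuadraticForm R M} {f : M}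
    (hfrad : f ∈ LinearMap.ker Q.polarBilin) (hQf : Q f = 0) (x : M) (t : R) :
    Q (x + t • f) = Q x := by
  have hpolar : QuadraticMap.polar Q x f = 0 := by
    rw [QuadraticMap.polar_comm]
    exact LinearMap.congr_fun hfrad x
  rw [QuadraticMap.map_add Q, QuadraticMap.map_smul, QuadraticMap.polar_smul_right, hpolar, hQf]
  simp

section deltaMap

omit [FiniteDimensional F V]

theorem deltaMap_apply (c : Module.Dual F V) (f x : V) : deltaMap c f x = x + c x • f := rfl

theorem deltaMap_eq_self_iff {c : Module.Dual F V} {f : V} (hf : f ≠ 0) (x : V) :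
    deltaMap c f x = x ↔ c x = 0 := by
  rw [deltaMap_apply, add_eq_left, smul_eq_zero, or_iff_left hf]

theorem deltaMap_bijective {a : Module.Dual F V} {f : V} (ha : a f ≠ -1) :
    Function.Bijective (deltaMap a f) := by
  have hunit : 1 + a f ≠ 0 := fun h => ha (eq_neg_of_add_eq_zero_right h)
  rw [Function.bijective_iff_has_inverse]
  refine ⟨deltaMap (-(1 + a f)⁻¹ • a) f, fun x => ?_, fun x => ?_⟩ <;>
  · simp only [deltaMap_apply, map_add, map_smul, LinearMap.smul_apply, smul_eq_mul]
    match_scalars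
    all_goals field_simp
    all_goals ring

theorem deltaMap_mem_orthSet {Q : QuadraticForm F V} {a : Module.Dual F V} {f : V}
    (ha : a f ≠ -1) (hfrad : f ∈ LinearMap.ker Q.polarBilin) (hQf : Q f = 0) :
    deltaMap a f ∈ orthSet Q :=
  ⟨deltaMap_bijective ha, fun x => Q.map_add_smul_of_mem_ker_polarBilin hfrad hQf x (a x)⟩

theorem deltaMap_mem_wOrthSet_iff {Q : QuadraticForm F V} {a : Module.Dual F V} {f : V}
    (hf : f ≠ 0) (ha : a f ≠ -1) (hfrad : f ∈ LinearMap.ker Q.polarBilin) (hQf : Q f = 0) :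
    deltaMap a f ∈ wOrthSet Q ↔ ∀ x ∈ LinearMap.ker Q.polarBilin, a x = 0 := by
  obtain ⟨hbij, hiso⟩ := deltaMap_mem_orthSet ha hfrad hQf
  simp only [wOrthSet, Set.mem_ofPred_eq, deltaMap_eq_self_iff hf, hbij, hiso, implies_true,
    true_and]

end deltaMap

/-- Lemma 3.1(d), first part: if `f ∈ V^⊥` and `Q f = 0`, then `ΔO(V,Q,f) = Δ(V,f)` and
`ΔO'(V,Q,f) = {δ_{a*,f} : a* ∈ (V^⊥)°}`, where `(V^⊥)°` is the annihilator of the radical. -/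
theorem stmt3 (Q : QuadraticForm F V) (f : V) (hf : f ≠ 0)
    (hfrad : f ∈ LinearMap.ker Q.polarBilin) (hQf : Q f = 0) :
    deltaSet f ∩ orthSet Q = deltaSet f ∧
    deltaSet f ∩ wOrthSet Q =
      {φ : V →ₗ[F] V | ∃ a : Module.Dual F V,
        (∀ x ∈ LinearMap.ker Q.polarBilin, a x = 0) ∧ φ = deltaMap a f} := by
  refine ⟨Set.inter_eq_left.mpr ?_, Set.ext fun φ => ⟨?_, ?_⟩⟩
  · rintro _ ⟨a, ha, rfl⟩
    exact deltaMap_mem_orthSet ha hfrad hQf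
  · rintro ⟨⟨a, ha, rfl⟩, hφ⟩
    exact ⟨a, (deltaMap_mem_wOrthSet_iff hf ha hfrad hQf).mp hφ, rfl⟩
  · rintro ⟨a, hann, rfl⟩
    have ha : a f ≠ -1 := by simp [hann f hfrad]
    exact ⟨⟨a, ha, rfl⟩, (deltaMap_mem_wOrthSet_iff hf ha hfrad hQf).mpr hann⟩
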